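/- arXiv:2105.14505 — 3 statements merged into one kernel-verified Lean document; each statement's English description precedes it below -/
import Mathlib

section
/- Toeplitz-matrix random linear code property: let F : 𝔽_q^ℓ → 𝔽_q^n (ℓ ≤ n) be the random linear map whose matrix is [I_ℓ; T] where T is an (n−ℓ)×ℓ Toeplitz matrix with i.i.d. uniform entries from 𝔽_q. Then for every nonzero x ∈ 𝔽_q^n, Pr{x ∈ Im F} ≤ q^{ℓ−n}. -/
open scoped Classical

/-- The `(n−ℓ)×ℓ` Toeplitz matrix with diagonals given by `t : Fin (n−1) → F`:
`T_{ij} = t_{i − j + (ℓ−1)}`. -/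
def toepMat (F : Type*) [Zero F] (ℓ n : ℕ) (t : Fin (n - 1) → F)
    (i : Fin (n - ℓ)) (j : Fin ℓ) : F :=
  if h : i.val + ℓ - 1 - j.val < n - 1 then t ⟨i.val + ℓ - 1 - j.val, h⟩ else 0

/-- The index into the diagonal vector used by `toepMat` at position `(i,j)`. -/
def toepIdx {ℓ n : ℕ} (hℓ : 1 ≤ ℓ) (hn : ℓ ≤ n) (i : Fin (n - ℓ)) (j : Fin ℓ) :
    Fin (n - 1) :=
  ⟨i.val + ℓ - 1 - j.val, by have := i.isLt; have := j.isLt; omega⟩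

lemma toep_entry {F : Type*} [Zero F] {ℓ n : ℕ} (hℓ : 1 ≤ ℓ) (hn : ℓ ≤ n)
    (t : Fin (n - 1) → F) (i : Fin (n - ℓ)) (j : Fin ℓ) :
    toepMat F ℓ n t i j = t (toepIdx hℓ hn i j) := by
  have h : i.val + ℓ - 1 - j.val < n - 1 := by have := i.isLt; have := j.isLt; omega
  simp [toepMat, toepIdx, h]

lemma toep_exp_aux {ℓ n : ℕ} (hℓ : 1 ≤ ℓ) (hn : ℓ ≤ n) :
    ℓ - 1 + n = ℓ + (n - 1) := by omega

lemma toep_count {F : Type*} [Field F] [Fintype F] {ℓ n : ℕ} (hℓ : 1 ≤ ℓ) (hn : ℓ ≤ n)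
    (m : Fin ℓ → F) (hm : m ≠ 0) (v : Fin (n - ℓ) → F) :
    (Finset.univ.filter (fun t : Fin (n - 1) → F =>
      ∀ i : Fin (n - ℓ), ∑ j, toepMat F ℓ n t i j * m j = v i)).card
      ≤ Fintype.card F ^ (ℓ - 1) := by
  classical
  obtain ⟨j₁, hj₁⟩ : ∃ j, m j ≠ 0 := by
    by_contra h; push_neg at h; exact hm (funext h)
  set s : Finset (Fin ℓ) := Finset.univ.filter (fun j => m j ≠ 0) with hs_def
  have hs : s.Nonempty := ⟨j₁, by simp [hs_def, hj₁]⟩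
  set j₀ := s.min' hs with hj₀def
  have hmj₀ : m j₀ ≠ 0 := by have := s.min'_mem hs; simpa [hs_def] using this
  have hmin : ∀ j : Fin ℓ, j < j₀ → m j = 0 := by
    intro j hj
    by_contra h
    exact absurd (s.min'_le j (by simp [hs_def, h])) (not_le.mpr hj)
  set a := ℓ - 1 - j₀.val with ha
  have hj₀ℓ : j₀.val < ℓ := j₀.isLt
  have haℓ : a ≤ ℓ - 1 := Nat.sub_le _ _
  -- determinedness on the "free" coordinates
  have key : ∀ t t' : Fin (n - 1) → F,
      (∀ i : Fin (n - ℓ), ∑ j, toepMat F ℓ n t i j * m j = v i) →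
      (∀ i : Fin (n - ℓ), ∑ j, toepMat F ℓ n t' i j * m j = v i) →
      (∀ k : Fin (n - 1), (k.val < a ∨ a + (n - ℓ) ≤ k.val) → t k = t' k) →
      t = t' := by
    intro t t' ht ht' hfree
    set d : Fin (n - 1) → F := fun k => t k - t' k with hd_def
    have hfreed : ∀ k : Fin (n - 1), (k.val < a ∨ a + (n - ℓ) ≤ k.val) → d k = 0 := by
      intro k hk; simp [hd_def, sub_eq_zero, hfree k hk]
    have hrowd : ∀ i : Fin (n - ℓ), ∑ j, d (toepIdx hℓ hn i j) * m j = 0 := by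
      intro i
      have h1 := ht i
      have h2 := ht' i
      simp only [toep_entry hℓ hn] at h1 h2
      simp only [hd_def, sub_mul, Finset.sum_sub_distrib, h1, h2, sub_self]
    have hdiag : ∀ N : ℕ, ∀ k : Fin (n - 1), k.val = N → a ≤ k.val →
        k.val < a + (n - ℓ) → d k = 0 := by
      intro N
      induction N using Nat.strong_induction_on with
      | _ N IH =>
        intro k hkN hk1 hk2
        set i : Fin (n - ℓ) := ⟨k.val - a, by omega⟩ with hi_def
        have hrow := hrowd i
        have hsum : ∑ j, d (toepIdx hℓ hn i j) * m j = d (toepIdx hℓ hn i j₀) * m j₀ := by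
          apply Finset.sum_eq_single
          · intro b _ hb
            rcases lt_or_gt_of_ne hb with hlt | hgt
            · rw [hmin b hlt, mul_zero]
            · have hb2 : b.val < ℓ := b.isLt
              have hK : (toepIdx hℓ hn i b).val = i.val + ℓ - 1 - b.val := rfl
              have hiv : i.val = k.val - a := rfl
              by_cases hc : (toepIdx hℓ hn i b).val < a
              · rw [hfreed _ (Or.inl hc), zero_mul]
              · have hKlt : (toepIdx hℓ hn i b).val < N := by
                  have : j₀.val < b.val := hgt
                  omega
                have hKa : a ≤ (toepIdx hℓ hn i b).val := by omega
                have hKb : (toepIdx hℓ hn i b).val < a + (n - ℓ) := by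
                  have : j₀.val < b.val := hgt
                  omega
                rw [IH _ hKlt _ rfl hKa hKb, zero_mul]
          · intro h; exact absurd (Finset.mem_univ j₀) h
        rw [hsum] at hrow
        have hidx : toepIdx hℓ hn i j₀ = k := by
          apply Fin.ext
          show i.val + ℓ - 1 - j₀.val = k.val
          have hiv : i.val = k.val - a := rfl
          omega
        rw [hidx] at hrow
        rcases mul_eq_zero.mp hrow with h | h
        · exact h
        · exact absurd h hmj₀
    funext k
    by_cases hk : k.val < a ∨ a + (n - ℓ) ≤ k.val
    · exact hfree k hk
    · push_neg at hk
      have := hdiag k.val k rfl hk.1 hk.2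
      simpa [hd_def, sub_eq_zero] using this
  -- inject solutions into functions on the free coordinates
  have hcard : Fintype.card (Fin (ℓ - 1) → F) = Fintype.card F ^ (ℓ - 1) := by
    simp
  rw [← hcard, ← Finset.card_univ]
  apply Finset.card_le_card_of_injOn
    (fun t p => t ⟨if p.val < a then p.val else p.val + (n - ℓ),
      by have := p.isLt; split <;> omega⟩)
  · intro t _; exact Finset.mem_univ _
  · intro t ht t' ht' hEq
    simp only [Finset.mem_coe, Finset.mem_filter] at ht ht'
    apply key t t' ht.2 ht'.2
    intro k hk
    rcases hk with hk | hk
    · have hp : k.val < ℓ - 1 := by omega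
      have := congrFun hEq ⟨k.val, hp⟩
      simp only at this
      have hfin : (⟨if k.val < a then k.val else k.val + (n - ℓ),
          by have : k.val < ℓ - 1 := hp; split <;> omega⟩ : Fin (n - 1)) = k := by
        apply Fin.ext; simp [hk]
      rwa [hfin] at this
    · have hp : k.val - (n - ℓ) < ℓ - 1 := by have := k.isLt; omega
      have := congrFun hEq ⟨k.val - (n - ℓ), hp⟩
      simp only at this
      have hcond : ¬ (k.val - (n - ℓ) < a) := by omega
      have hfin : (⟨if k.val - (n - ℓ) < a then k.val - (n - ℓ)
          else k.val - (n - ℓ) + (n - ℓ),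
          by have := k.isLt; split <;> omega⟩ : Fin (n - 1)) = k := by
        apply Fin.ext
        simp only [hcond, if_false]
        have := k.isLt; omega
      rwa [hfin] at this

/-- Toeplitz random linear code property: for the random linear map
`F : 𝔽_q^ℓ → 𝔽_q^n` with matrix `[I_ℓ; T]`, `T` a random Toeplitz matrix with
i.i.d. uniform diagonals, every nonzero `x ∈ 𝔽_q^n` satisfies
`Pr{x ∈ Im F} ≤ q^{ℓ−n}`. -/
theorem toeplitz_image_bound {F : Type*} [Field F] [Fintype F]
    {ℓ n : ℕ} (hℓ : 1 ≤ ℓ) (hn : ℓ ≤ n)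
    (x : (Fin ℓ → F) × (Fin (n - ℓ) → F)) (hx : x ≠ 0) :
    ((Finset.univ.filter (fun t : Fin (n - 1) → F =>
        x ∈ Set.range (fun m : Fin ℓ → F =>
          (m, fun i : Fin (n - ℓ) => ∑ j, toepMat F ℓ n t i j * m j)))).card : ℝ)
        / (Fintype.card F : ℝ) ^ (n - 1)
      ≤ (Fintype.card F : ℝ) ^ ℓ / (Fintype.card F : ℝ) ^ n := by
  classical
  have hq : (0 : ℝ) < (Fintype.card F : ℝ) := by
    exact_mod_cast Fintype.card_pos
  have hmem : ∀ t : Fin (n - 1) → F,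
      (x ∈ Set.range (fun m : Fin ℓ → F =>
        (m, fun i : Fin (n - ℓ) => ∑ j, toepMat F ℓ n t i j * m j))) ↔
      (∀ i : Fin (n - ℓ), ∑ j, toepMat F ℓ n t i j * x.1 j = x.2 i) := by
    intro t
    constructor
    · rintro ⟨m, hm⟩
      have h1 : m = x.1 := congrArg Prod.fst hm
      have h2 : (fun i : Fin (n - ℓ) => ∑ j, toepMat F ℓ n t i j * m j) = x.2 :=
        congrArg Prod.snd hm
      intro i
      rw [← h1]
      exact congrFun h2 i
    · intro h
      exact ⟨x.1, Prod.ext rfl (funext h)⟩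
  by_cases hx1 : x.1 = 0
  · have hx2 : x.2 ≠ 0 := by
      intro h; exact hx (Prod.ext hx1 h)
    have hempty : (Finset.univ.filter (fun t : Fin (n - 1) → F =>
        x ∈ Set.range (fun m : Fin ℓ → F =>
          (m, fun i : Fin (n - ℓ) => ∑ j, toepMat F ℓ n t i j * m j)))) = ∅ := by
      apply Finset.filter_false_of_mem
      intro t _
      rw [hmem t]
      intro h
      apply hx2
      funext i
      rw [← h i]
      simp [hx1]
    rw [hempty]
    simp only [Finset.card_empty, Nat.cast_zero, zero_div]
    positivity
  · have hle := toep_count hℓ hn x.1 hx1 x.2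
    have hcard : (Finset.univ.filter (fun t : Fin (n - 1) → F =>
        x ∈ Set.range (fun m : Fin ℓ → F =>
          (m, fun i : Fin (n - ℓ) => ∑ j, toepMat F ℓ n t i j * m j)))).card
        ≤ Fintype.card F ^ (ℓ - 1) := by
      refine le_trans (le_of_eq ?_) hle
      congr 1
      apply Finset.filter_congr
      intro t _
      simp [hmem t]
    rw [div_le_div_iff₀ (by positivity) (by positivity)]
    set c : ℕ := (Finset.univ.filter (fun t : Fin (n - 1) → F =>
        x ∈ Set.range (fun m : Fin ℓ → F =>
          (m, fun i : Fin (n - ℓ) => ∑ j, toepMat F ℓ n t i j * m j)))).card with hc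
    calc (c : ℝ) * (Fintype.card F : ℝ) ^ n
        ≤ (Fintype.card F : ℝ) ^ (ℓ - 1) * (Fintype.card F : ℝ) ^ n := by
          apply mul_le_mul_of_nonneg_right _ (by positivity)
          exact_mod_cast hcard
      _ = (Fintype.card F : ℝ) ^ ℓ * (Fintype.card F : ℝ) ^ (n - 1) := by
          rw [← pow_add, ← pow_add, toep_exp_aux hℓ hn]
end

section
/- Converse via Fano: let {Ψ_n} be a sequence of codes for computing A⊕B over a two-sender memoryless classical MAC W(y|x_A,x_B), with messages M_{A,n}, M_{B,n} independent uniform on message sets of size ⌈2^{nR}⌉, encoders to X_A^n, X_B^n, and a decoder whose error probability for recovering M_{A,n} ⊕ M_{B,n} tends to 0. Then R ≤ max_{P_B, a} I(B; Y | A = a), where the maximum is over input distributions P_B and fixed symbols a. -/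
/-- Mutual information (base 2) of a joint distribution on a product of finite types. -/
noncomputable def mutInfo {X Y : Type*} [Fintype X] [Fintype Y] (μ : X → Y → ℝ) : ℝ :=
  ∑ x, ∑ y, if μ x y = 0 then 0 else
    μ x y * Real.logb 2 (μ x y / ((∑ y', μ x y') * (∑ x', μ x' y)))

/-!
Fix the message `a` of sender A. Then `eB` together with the decoder `dec - a` is a point-to-point
code for the memoryless channel `W (eA a i)`, and averaging its error probability over `a` gives
the error probability of the sum code.

For a point-to-point code with messages `M` and error `ε`, one Gibbs inequality gives Fano's
inequality and single-letterization at once: compare the joint law `T m y / |M|` of message and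
output with `Q y * r m y`, where `Q` is the product of the per-letter output laws and `r m y` is
`1/2` if `y` decodes to `m` and `1/(2|M|)` otherwise. This yields
`(1 - ε) log |M| ≤ log 2 + ∑ i, I(X_i; Y_i)`, with `X_i` distributed as the `i`-th letter of a
uniformly chosen codeword. With `|M| ≥ 2^(nR)` and `ε → 0`, dividing by `n` forces
`R ≤ max I(B; Y | A = a)`.
-/

open Finset Real Filter Topology

lemma sub_le_mul_log_div {p q : ℝ} (hp : 0 ≤ p) (hq : 0 ≤ q) (hpq : q = 0 → p = 0) :
    p - q ≤ p * log (p / q) := by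
  obtain rfl | hp := hp.eq_or_lt
  · simpa using hq
  have hq : 0 < q := hq.lt_of_ne' fun h => hp.ne' (hpq h)
  have := one_sub_inv_le_log_of_pos (div_pos hp hq)
  calc p - q = p * (1 - (p / q)⁻¹) := by field_simp
    _ ≤ p * log (p / q) := by gcongr

section Fano

variable {M Ω : Type*} [Fintype M] [DecidableEq M]

noncomputable def fanoWeight (g : Ω → M) (m : M) (y : Ω) : ℝ :=
  (if g y = m then (Fintype.card M : ℝ) else 1) / (2 * Fintype.card M)

lemma fanoWeight_pos [Nonempty M] (g : Ω → M) (m : M) (y : Ω) : 0 < fanoWeight g m y := by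
  have : (0 : ℝ) < Fintype.card M := Nat.cast_pos.2 Fintype.card_pos
  unfold fanoWeight
  positivity

lemma sum_fanoWeight_le_one [Nonempty M] (g : Ω → M) (y : Ω) : ∑ m, fanoWeight g m y ≤ 1 := by
  have : (0 : ℝ) < Fintype.card M := Nat.cast_pos.2 Fintype.card_pos
  calc ∑ m, fanoWeight g m y
      ≤ ∑ m, ((if g y = m then (Fintype.card M : ℝ) else 0) + 1) / (2 * Fintype.card M) := by
        unfold fanoWeight
        gcongr with m
        split_ifs <;> linarith
    _ = 1 := by
        simp only [← Finset.sum_div, Finset.sum_add_distrib, Finset.sum_ite_eq, mem_univ,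
          if_true, Finset.sum_const, card_univ, nsmul_eq_mul, mul_one]
        field_simp
        ring

lemma log_inv_card_div_fanoWeight [Nonempty M] (g : Ω → M) (m : M) (y : Ω) :
    log ((Fintype.card M : ℝ)⁻¹ / fanoWeight g m y) =
      log 2 - if g y = m then log (Fintype.card M) else 0 := by
  have : (0 : ℝ) < Fintype.card M := Nat.cast_pos.2 Fintype.card_pos
  unfold fanoWeight
  split_ifs
  · rw [← log_div two_ne_zero this.ne']
    congr 1
    field_simp
  · rw [sub_zero]
    congr 1
    field_simp

variable [Fintype Ω]

noncomputable def errorProb (T : M → Ω → ℝ) (g : Ω → M) : ℝ :=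
  (Fintype.card M : ℝ)⁻¹ * ∑ m, ∑ y, T m y * if g y = m then 0 else 1

theorem one_sub_errorProb_mul_log_card_le [Nonempty M] (T : M → Ω → ℝ)
    (hT0 : ∀ m y, 0 ≤ T m y) (hT1 : ∀ m, ∑ y, T m y = 1)
    (Q : Ω → ℝ) (hQ0 : ∀ y, 0 ≤ Q y) (hQ1 : ∑ y, Q y ≤ 1) (hQT : ∀ m y, Q y = 0 → T m y = 0)
    (g : Ω → M) :
    (1 - errorProb T g) * log (Fintype.card M) ≤
      log 2 + (Fintype.card M : ℝ)⁻¹ * ∑ m, ∑ y, T m y * log (T m y / Q y) := by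
  set N : ℝ := (Fintype.card M : ℝ)
  have hN : 0 < N := Nat.cast_pos.2 Fintype.card_pos
  have hTsum : ∑ m, ∑ y, T m y = N := by simp [hT1, N]
  have gibbs : ∑ m, ∑ y, (N⁻¹ * T m y - Q y * fanoWeight g m y) ≤
      ∑ m, ∑ y, N⁻¹ * T m y * log (N⁻¹ * T m y / (Q y * fanoWeight g m y)) := by
    gcongr with m _ y _
    refine sub_le_mul_log_div (mul_nonneg (inv_nonneg.2 hN.le) (hT0 m y))
      (mul_nonneg (hQ0 y) (fanoWeight_pos g m y).le) fun h => ?_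
    rw [mul_eq_zero, or_iff_left (fanoWeight_pos g m y).ne'] at h
    simp [hQT m y h]
  have hmass : 0 ≤ ∑ m, ∑ y, (N⁻¹ * T m y - Q y * fanoWeight g m y) := by
    have hq : ∑ m, ∑ y, Q y * fanoWeight g m y ≤ 1 := by
      rw [Finset.sum_comm]
      calc ∑ y, ∑ m, Q y * fanoWeight g m y = ∑ y, Q y * ∑ m, fanoWeight g m y := by
            simp only [Finset.mul_sum]
        _ ≤ ∑ y, Q y := by
            gcongr with y
            exact mul_le_of_le_one_right (hQ0 y) (sum_fanoWeight_le_one g y)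
        _ ≤ 1 := hQ1
    simp only [Finset.sum_sub_distrib, ← Finset.mul_sum, hTsum, inv_mul_cancel₀ hN.ne']
    linarith
  have hsplit : ∀ m y, N⁻¹ * T m y * log (N⁻¹ * T m y / (Q y * fanoWeight g m y)) =
      N⁻¹ * (T m y * log (T m y / Q y)) +
        ((log 2 - log N) * (N⁻¹ * T m y) + log N * (N⁻¹ * (T m y * if g y = m then 0 else 1))) := by
    intro m y
    by_cases hT : T m y = 0
    · simp [hT]
    have hQ : Q y ≠ 0 := fun h => hT (hQT m y h)
    rw [show N⁻¹ * T m y / (Q y * fanoWeight g m y) =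
        T m y / Q y * (N⁻¹ / fanoWeight g m y) by ring,
      log_mul (div_ne_zero hT hQ) (div_pos (inv_pos.2 hN) (fanoWeight_pos g m y)).ne',
      log_inv_card_div_fanoWeight]
    split_ifs <;> ring
  simp only [hsplit, Finset.sum_add_distrib, ← Finset.mul_sum, hTsum, inv_mul_cancel₀ hN.ne']
    at gibbs
  rw [errorProb]
  linarith

end Fano

section ProductChannel

variable {ι Y : Type*} [Fintype ι] [DecidableEq ι] [Fintype Y]

lemma sum_prod_eq_one (g : ι → Y → ℝ) (hg : ∀ i, ∑ y, g i y = 1) :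
    ∑ ys : ι → Y, ∏ i, g i (ys i) = 1 := by
  simp [← Fintype.prod_sum, hg]

lemma sum_prod_mul_apply (g : ι → Y → ℝ) (hg : ∀ i, ∑ y, g i y = 1) (i : ι) (h : Y → ℝ) :
    ∑ ys : ι → Y, (∏ j, g j (ys j)) * h (ys i) = ∑ y, g i y * h y := by
  have hprod : ∀ ys : ι → Y, (∏ j, g j (ys j)) * h (ys i) =
      ∏ j, g j (ys j) * (if j = i then h (ys j) else 1) := by
    intro ys
    rw [Finset.prod_mul_distrib, Finset.prod_ite_eq' Finset.univ i, if_pos (mem_univ i)]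
  rw [Finset.sum_congr rfl fun ys _ => hprod ys,
    ← Fintype.prod_sum fun j y => g j y * if j = i then h y else 1,
    Finset.prod_eq_single i (fun j _ hj => by simp [hj, hg]) fun h => absurd (mem_univ i) h]
  simp

lemma sum_prod_mul_log_div_prod (g q : ι → Y → ℝ) (hg : ∀ i, ∑ y, g i y = 1)
    (hgq : ∀ i y, q i y = 0 → g i y = 0) :
    ∑ ys : ι → Y, (∏ i, g i (ys i)) * log ((∏ i, g i (ys i)) / ∏ i, q i (ys i)) =
      ∑ i, ∑ y, g i y * log (g i y / q i y) := by
  have hlog : ∀ ys : ι → Y, (∏ i, g i (ys i)) * log ((∏ i, g i (ys i)) / ∏ i, q i (ys i)) =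
      ∑ i, (∏ j, g j (ys j)) * log (g i (ys i) / q i (ys i)) := by
    intro ys
    by_cases h0 : ∏ i, g i (ys i) = 0
    · simp [h0]
    have hg0 : ∀ i, g i (ys i) ≠ 0 := fun i => Finset.prod_ne_zero_iff.1 h0 i (mem_univ i)
    rw [← Finset.prod_div_distrib, log_prod fun i _ => div_ne_zero (hg0 i) (mt (hgq i _) (hg0 i)),
      Finset.mul_sum]
  simp_rw [hlog]
  rw [Finset.sum_comm]
  exact Finset.sum_congr rfl fun i _ => sum_prod_mul_apply g hg i fun y => log (g i y / q i y)

end ProductChannel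

section MutualInformation

variable {B Y : Type*} [Fintype B] [Fintype Y]

lemma log_two_mul_mutInfo (P : B → ℝ) (V : B → Y → ℝ) (hV : ∀ b, ∑ y, V b y = 1) :
    log 2 * mutInfo (fun b y => P b * V b y) =
      ∑ b, P b * ∑ y, V b y * log (V b y / ∑ b', P b' * V b' y) := by
  rw [mutInfo, Finset.mul_sum]
  refine Finset.sum_congr rfl fun b _ => ?_
  rw [Finset.mul_sum, Finset.mul_sum]
  refine Finset.sum_congr rfl fun y _ => ?_
  split_ifs with h
  · rcases mul_eq_zero.1 h with h | h <;> simp [h]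
  · have hP : P b ≠ 0 := left_ne_zero_of_mul h
    have hrow : ∑ y', P b * V b y' = P b := by rw [← Finset.mul_sum, hV, mul_one]
    have hlog2 : log 2 ≠ 0 := (log_pos one_lt_two).ne'
    rw [hrow, mul_div_mul_left _ _ hP, logb]
    field_simp

lemma sum_mul_log_div_marginal_le_neg_log (P : B → ℝ) (hP0 : ∀ b, 0 ≤ P b) (V : B → Y → ℝ)
    (hV0 : ∀ b y, 0 ≤ V b y) (hV1 : ∀ b, ∑ y, V b y = 1) {b : B} (hP : 0 < P b) :
    ∑ y, V b y * log (V b y / ∑ b', P b' * V b' y) ≤ -log (P b) :=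
  calc ∑ y, V b y * log (V b y / ∑ b', P b' * V b' y) ≤ ∑ y, V b y * -log (P b) := by
        refine Finset.sum_le_sum fun y _ => ?_
        obtain h | hV := (hV0 b y).eq_or_lt
        · simp [← h]
        have hQ : P b * V b y ≤ ∑ b', P b' * V b' y :=
          Finset.single_le_sum (fun b' _ => mul_nonneg (hP0 b') (hV0 b' y)) (mem_univ b)
        have hQpos := (mul_pos hP hV).trans_le hQ
        refine mul_le_mul_of_nonneg_left ?_ hV.le
        rw [← log_inv]
        refine log_le_log (div_pos hV hQpos) ?_
        rw [div_le_iff₀ hQpos, inv_mul_eq_div, le_div_iff₀ hP]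
        linarith
    _ = -log (P b) := by rw [← Finset.sum_mul, hV1, one_mul]

-- The crude bound `I(B; Y) ≤ H(B) ≤ |B|`: it only has to make the supremum finite.
lemma log_two_mul_mutInfo_le_card (P : B → ℝ) (hP0 : ∀ b, 0 ≤ P b) (V : B → Y → ℝ)
    (hV0 : ∀ b y, 0 ≤ V b y) (hV1 : ∀ b, ∑ y, V b y = 1) :
    log 2 * mutInfo (fun b y => P b * V b y) ≤ Fintype.card B := by
  rw [log_two_mul_mutInfo P V hV1]
  calc ∑ b, P b * ∑ y, V b y * log (V b y / ∑ b', P b' * V b' y)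
      ≤ ∑ b, negMulLog (P b) := by
        gcongr with b
        obtain h | hP := (hP0 b).eq_or_lt
        · simp [← h]
        rw [negMulLog, neg_mul, ← mul_neg]
        exact mul_le_mul_of_nonneg_left
          (sum_mul_log_div_marginal_le_neg_log P hP0 V hV0 hV1 hP) hP.le
    _ ≤ ∑ _b : B, (1 : ℝ) := by
        gcongr with b; linarith [negMulLog_le_one_sub_self (hP0 b), hP0 b]
    _ = Fintype.card B := by simp

end MutualInformation

section Empirical

variable {M B : Type*} [Fintype M] [DecidableEq B]

noncomputable def empiricalDist (f : M → B) (b : B) : ℝ :=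
  (Fintype.card M : ℝ)⁻¹ * ∑ m, if f m = b then 1 else 0

lemma empiricalDist_nonneg (f : M → B) (b : B) : 0 ≤ empiricalDist f b :=
  mul_nonneg (by positivity) (Finset.sum_nonneg fun _ _ => by positivity)

variable [Fintype B]

lemma sum_empiricalDist_mul (f : M → B) (h : B → ℝ) :
    ∑ b, empiricalDist f b * h b = (Fintype.card M : ℝ)⁻¹ * ∑ m, h (f m) := by
  simp only [empiricalDist, mul_assoc, ← Finset.mul_sum, Finset.sum_mul, ite_mul, one_mul,
    zero_mul]
  rw [Finset.sum_comm]
  simp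

lemma sum_empiricalDist [Nonempty M] (f : M → B) : ∑ b, empiricalDist f b = 1 := by
  simpa using sum_empiricalDist_mul f 1

end Empirical

section Memoryless

variable {M B ι Y : Type*} [Fintype M]

noncomputable def outputDist (V : ι → B → Y → ℝ) (f : M → ι → B) (i : ι) (y : Y) : ℝ :=
  (Fintype.card M : ℝ)⁻¹ * ∑ m, V i (f m i) y

lemma outputDist_nonneg (V : ι → B → Y → ℝ) (hV0 : ∀ i b y, 0 ≤ V i b y) (f : M → ι → B)
    (i : ι) (y : Y) : 0 ≤ outputDist V f i y :=
  mul_nonneg (by positivity) (Finset.sum_nonneg fun _ _ => hV0 _ _ _)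

lemma apply_eq_zero_of_outputDist_eq_zero (V : ι → B → Y → ℝ) (hV0 : ∀ i b y, 0 ≤ V i b y)
    (f : M → ι → B) (m : M) (i : ι) (y : Y) (h : outputDist V f i y = 0) : V i (f m i) y = 0 := by
  have : Nonempty M := ⟨m⟩
  have hN : (Fintype.card M : ℝ)⁻¹ ≠ 0 := inv_ne_zero (Nat.cast_ne_zero.2 Fintype.card_ne_zero)
  have := (mul_eq_zero.1 h).resolve_left hN
  exact (Finset.sum_eq_zero_iff_of_nonneg fun m _ => hV0 _ _ _).1 this m (mem_univ m)

lemma sum_outputDist [Fintype Y] [Nonempty M] (V : ι → B → Y → ℝ) (hV1 : ∀ i b, ∑ y, V i b y = 1)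
    (f : M → ι → B) (i : ι) : ∑ y, outputDist V f i y = 1 := by
  simp only [outputDist, ← Finset.mul_sum]
  rw [Finset.sum_comm]
  simp [hV1]

variable [Fintype B] [DecidableEq B] [Fintype ι] [DecidableEq ι] [Fintype Y]

lemma inv_card_mul_sum_mul_log_div_outputDist (V : ι → B → Y → ℝ)
    (hV0 : ∀ i b y, 0 ≤ V i b y) (hV1 : ∀ i b, ∑ y, V i b y = 1) (f : M → ι → B) :
    (Fintype.card M : ℝ)⁻¹ * ∑ m, ∑ ys : ι → Y, (∏ i, V i (f m i) (ys i)) *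
        log ((∏ i, V i (f m i) (ys i)) / ∏ i, outputDist V f i (ys i)) =
      log 2 * ∑ i, mutInfo (fun b y => empiricalDist (fun m => f m i) b * V i b y) := by
  calc (Fintype.card M : ℝ)⁻¹ * ∑ m, ∑ ys : ι → Y, (∏ i, V i (f m i) (ys i)) *
          log ((∏ i, V i (f m i) (ys i)) / ∏ i, outputDist V f i (ys i))
      = (Fintype.card M : ℝ)⁻¹ *
          ∑ m, ∑ i, ∑ y, V i (f m i) y * log (V i (f m i) y / outputDist V f i y) := by
        congr 1
        exact Finset.sum_congr rfl fun m _ => sum_prod_mul_log_div_prod _ _ (fun i => hV1 i _)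
          fun i y => apply_eq_zero_of_outputDist_eq_zero V hV0 f m i y
    _ = ∑ i, ∑ b, empiricalDist (fun m => f m i) b *
          ∑ y, V i b y * log (V i b y / outputDist V f i y) := by
        rw [Finset.sum_comm, Finset.mul_sum]
        exact Finset.sum_congr rfl fun i _ => (sum_empiricalDist_mul (fun m => f m i)
          fun b => ∑ y, V i b y * log (V i b y / outputDist V f i y)).symm
    _ = log 2 * ∑ i, mutInfo (fun b y => empiricalDist (fun m => f m i) b * V i b y) := by
        have hout : ∀ i y, ∑ b, empiricalDist (fun m => f m i) b * V i b y = outputDist V f i y :=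
          fun i y => sum_empiricalDist_mul (fun m => f m i) fun b => V i b y
        simp only [Finset.mul_sum, log_two_mul_mutInfo _ _ (hV1 _), hout]

theorem one_sub_errorProb_mul_logb_card_le_sum_mutInfo [DecidableEq M] [Nonempty M]
    (V : ι → B → Y → ℝ) (hV0 : ∀ i b y, 0 ≤ V i b y) (hV1 : ∀ i b, ∑ y, V i b y = 1)
    (f : M → ι → B) (g : (ι → Y) → M) :
    (1 - errorProb (fun m ys => ∏ i, V i (f m i) (ys i)) g) * logb 2 (Fintype.card M) ≤
      1 + ∑ i, mutInfo (fun b y => empiricalDist (fun m => f m i) b * V i b y) := by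
  have fano := one_sub_errorProb_mul_log_card_le (Ω := ι → Y)
    (fun m ys => ∏ i, V i (f m i) (ys i))
    (fun m ys => Finset.prod_nonneg fun i _ => hV0 _ _ _)
    (fun m => sum_prod_eq_one _ fun i => hV1 _ _)
    (fun ys => ∏ i, outputDist V f i (ys i))
    (fun ys => Finset.prod_nonneg fun i _ => outputDist_nonneg V hV0 f i _)
    (sum_prod_eq_one _ (sum_outputDist V hV1 f)).le
    (fun m ys h => by
      obtain ⟨i, -, hi⟩ := Finset.prod_eq_zero_iff.1 h
      exact Finset.prod_eq_zero (mem_univ i) (apply_eq_zero_of_outputDist_eq_zero V hV0 f m i _ hi))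
    g
  rw [inv_card_mul_sum_mul_log_div_outputDist V hV0 hV1 f] at fano
  rw [logb, ← mul_div_assoc, div_le_iff₀ (log_pos one_lt_two)]
  linarith

end Memoryless

lemma one_sub_average_mul_le {M : Type*} [Fintype M] [Nonempty M] {ε : M → ℝ} {L K : ℝ}
    (h : ∀ a, (1 - ε a) * L ≤ K) : (1 - (Fintype.card M : ℝ)⁻¹ * ∑ a, ε a) * L ≤ K := by
  have hN : (0 : ℝ) < Fintype.card M := Nat.cast_pos.2 Fintype.card_pos
  rw [← mul_le_mul_iff_of_pos_left hN]
  calc (Fintype.card M : ℝ) * ((1 - (Fintype.card M : ℝ)⁻¹ * ∑ a, ε a) * L)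
      = ∑ a, (1 - ε a) * L := by
        rw [← Finset.sum_mul, Finset.sum_sub_distrib]
        field_simp
        simp only [Finset.sum_const, card_univ, nsmul_eq_mul, mul_one]
        ring
    _ ≤ ∑ _a : M, K := Finset.sum_le_sum fun a _ => h a
    _ = Fintype.card M * K := by simp

section MAC

variable {XA XB Y M ι : Type*} [Fintype Y] [Fintype M] [DecidableEq M] [AddCommGroup M]
  [Fintype ι] [DecidableEq ι]

noncomputable def sumErrorProb (W : XA → XB → Y → ℝ) (eA : M → ι → XA) (eB : M → ι → XB)
    (dec : (ι → Y) → M) : ℝ :=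
  ∑ mA, ∑ mB, ∑ ys : ι → Y, (Fintype.card M : ℝ)⁻¹ * (Fintype.card M : ℝ)⁻¹ *
    (∏ i, W (eA mA i) (eB mB i) (ys i)) * (if dec ys = mA + mB then 0 else 1)

lemma sumErrorProb_eq (W : XA → XB → Y → ℝ) (eA : M → ι → XA) (eB : M → ι → XB)
    (dec : (ι → Y) → M) :
    sumErrorProb W eA eB dec = (Fintype.card M : ℝ)⁻¹ *
      ∑ a, errorProb (fun m ys => ∏ i, W (eA a i) (eB m i) (ys i)) (fun ys => dec ys - a) := by
  simp only [sumErrorProb, errorProb, sub_eq_iff_eq_add', Finset.mul_sum, mul_assoc]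

theorem one_sub_sumErrorProb_mul_logb_card_le [Fintype XB] [DecidableEq XB] [Nonempty M]
    (W : XA → XB → Y → ℝ)
    (hW0 : ∀ a b y, 0 ≤ W a b y) (hW1 : ∀ a b, ∑ y, W a b y = 1)
    (eA : M → ι → XA) (eB : M → ι → XB) (dec : (ι → Y) → M) (C : ℝ)
    (hC : ∀ a (PB : XB → ℝ), (∀ b, 0 ≤ PB b) → ∑ b, PB b = 1 →
      mutInfo (fun b y => PB b * W a b y) ≤ C) :
    (1 - sumErrorProb W eA eB dec) * logb 2 (Fintype.card M) ≤ 1 + Fintype.card ι * C := by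
  have hfix : ∀ a, (1 - errorProb (fun m ys => ∏ i, W (eA a i) (eB m i) (ys i))
      (fun ys => dec ys - a)) * logb 2 (Fintype.card M) ≤ 1 + Fintype.card ι * C := by
    intro a
    refine (one_sub_errorProb_mul_logb_card_le_sum_mutInfo (fun i => W (eA a i))
      (fun i => hW0 _) (fun i => hW1 _) eB _).trans ?_
    gcongr
    calc ∑ i, mutInfo (fun b y => empiricalDist (fun m => eB m i) b * W (eA a i) b y)
        ≤ ∑ _i : ι, C := Finset.sum_le_sum fun i _ =>
          hC _ _ (empiricalDist_nonneg _) (sum_empiricalDist _)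
      _ = Fintype.card ι * C := by simp
  rw [sumErrorProb_eq]
  exact one_sub_average_mul_le hfix

end MAC

lemma le_of_tendsto_of_one_sub_mul_le {ε : ℕ → ℝ} {R C : ℝ} (hε : Tendsto ε atTop (𝓝 0))
    (h : ∀ n : ℕ, ε n < 1 → (1 - ε n) * (n * R) ≤ 1 + n * C) : R ≤ C := by
  have hlim : Tendsto (fun n : ℕ => (1 - ε n) * R) atTop (𝓝 ((1 - 0) * R)) :=
    (tendsto_const_nhds.sub hε).mul_const R
  have hlim' : Tendsto (fun n : ℕ => (n : ℝ)⁻¹ + C) atTop (𝓝 (0 + C)) :=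
    tendsto_inv_atTop_nhds_zero_nat.add_const C
  rw [sub_zero, one_mul] at hlim
  rw [zero_add] at hlim'
  refine le_of_tendsto_of_tendsto hlim hlim' ?_
  filter_upwards [hε.eventually_lt_const one_pos, eventually_gt_atTop 0] with n hn hn0
  have hn0 : (0 : ℝ) < n := Nat.cast_pos.2 hn0
  rw [← mul_le_mul_iff_of_pos_left hn0]
  calc (n : ℝ) * ((1 - ε n) * R) = (1 - ε n) * (n * R) := by ring
    _ ≤ 1 + n * C := h n hn
    _ = n * ((n : ℝ)⁻¹ + C) := by field_simp

lemma bddAbove_mutInfo {XA XB Y : Type*} [Fintype XB] [Fintype Y] (W : XA → XB → Y → ℝ)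
    (hW0 : ∀ a b y, 0 ≤ W a b y) (hW1 : ∀ a b, ∑ y, W a b y = 1) :
    BddAbove {x : ℝ | ∃ (PB : XB → ℝ) (a : XA), (∀ b, 0 ≤ PB b) ∧ (∑ b, PB b = 1)
      ∧ x = mutInfo (fun (b : XB) (y : Y) => PB b * W a b y)} := by
  refine ⟨Fintype.card XB / log 2, ?_⟩
  rintro _ ⟨PB, a, hPB, -, rfl⟩
  rw [le_div_iff₀ (log_pos one_lt_two), mul_comm]
  exact log_two_mul_mutInfo_le_card PB hPB (W a) (hW0 a) (hW1 a)

theorem comp_converse_general {XA XB Y : Type*} [Fintype XB] [Fintype Y]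
    (W : XA → XB → Y → ℝ)
    (hW : ∀ a b y, 0 ≤ W a b y) (hW1 : ∀ a b, ∑ y, W a b y = 1)
    (p : ℕ) [Fact (Nat.Prime p)] (R : ℝ)
    (ℓ : ℕ → ℕ)
    (encA : ∀ n : ℕ, (Fin (ℓ n) → ZMod p) → Fin n → XA)
    (encB : ∀ n : ℕ, (Fin (ℓ n) → ZMod p) → Fin n → XB)
    (dec : ∀ n : ℕ, (Fin n → Y) → (Fin (ℓ n) → ZMod p))
    (hsize : ∀ n : ℕ, (2 : ℝ) ^ ((n : ℝ) * R) ≤ (p : ℝ) ^ (ℓ n))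
    (herr : Filter.Tendsto (fun n : ℕ =>
        ∑ mA : Fin (ℓ n) → ZMod p, ∑ mB : Fin (ℓ n) → ZMod p, ∑ ys : Fin n → Y,
          ((p : ℝ) ^ ℓ n)⁻¹ * ((p : ℝ) ^ ℓ n)⁻¹
            * (∏ i, W (encA n mA i) (encB n mB i) (ys i))
            * (if dec n ys = mA + mB then 0 else 1))
      Filter.atTop (nhds 0)) :
    R ≤ sSup {x : ℝ | ∃ (PB : XB → ℝ) (a : XA),
        (∀ b, 0 ≤ PB b) ∧ (∑ b, PB b = 1)
        ∧ x = mutInfo (fun (b : XB) (y : Y) => PB b * W a b y)} := by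
  classical
  have hC := fun a PB h0 h1 => le_csSup (bddAbove_mutInfo W hW hW1) ⟨PB, a, h0, h1, rfl⟩
  have hcard : ∀ n, (Fintype.card (Fin (ℓ n) → ZMod p) : ℝ) = (p : ℝ) ^ ℓ n := by simp
  have herr' : Tendsto (fun n => sumErrorProb W (encA n) (encB n) (dec n)) atTop (𝓝 0) := by
    simpa only [sumErrorProb, hcard] using herr
  refine le_of_tendsto_of_one_sub_mul_le herr' fun n hn => ?_
  have hrate : n * R ≤ logb 2 (Fintype.card (Fin (ℓ n) → ZMod p)) := by
    rw [le_logb_iff_rpow_le one_lt_two (Nat.cast_pos.2 Fintype.card_pos), hcard]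
    exact hsize n
  have hconv := one_sub_sumErrorProb_mul_logb_card_le W hW hW1 (encA n) (encB n) (dec n) _ hC
  rw [Fintype.card_fin] at hconv
  exact (mul_le_mul_of_nonneg_left hrate (by linarith)).trans hconv

/-- Converse via Fano: for any sequence of codes computing `M_A ⊕ M_B` over a
memoryless classical MAC `W(y|x_A,x_B)`, with independent uniform messages on
`𝔽_p^{ℓ(n)}` of size at least `2^{nR}` and vanishing error probability, the rate
satisfies `R ≤ max_{P_B, a} I(B; Y | A = a)`. -/
theorem comp_converse {XA XB Y : Type*} [Fintype XA] [Fintype XB] [Fintype Y]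
    [DecidableEq Y]
    (W : XA → XB → Y → ℝ)
    (hW : ∀ a b y, 0 ≤ W a b y) (hW1 : ∀ a b, ∑ y, W a b y = 1)
    (p : ℕ) [Fact (Nat.Prime p)] (R : ℝ) (hR : 0 < R)
    (ℓ : ℕ → ℕ)
    (encA : ∀ n : ℕ, (Fin (ℓ n) → ZMod p) → Fin n → XA)
    (encB : ∀ n : ℕ, (Fin (ℓ n) → ZMod p) → Fin n → XB)
    (dec : ∀ n : ℕ, (Fin n → Y) → (Fin (ℓ n) → ZMod p))
    (hsize : ∀ n : ℕ, (2 : ℝ) ^ ((n : ℝ) * R) ≤ (p : ℝ) ^ (ℓ n))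
    (herr : Filter.Tendsto (fun n : ℕ =>
        ∑ mA : Fin (ℓ n) → ZMod p, ∑ mB : Fin (ℓ n) → ZMod p, ∑ ys : Fin n → Y,
          ((p : ℝ) ^ ℓ n)⁻¹ * ((p : ℝ) ^ ℓ n)⁻¹
            * (∏ i, W (encA n mA i) (encB n mB i) (ys i))
            * (if dec n ys = mA + mB then 0 else 1))
      Filter.atTop (nhds 0)) :
    R ≤ sSup {x : ℝ | ∃ (PB : XB → ℝ) (a : XA),
        (∀ b, 0 ≤ PB b) ∧ (∑ b, PB b = 1)
        ∧ x = mutInfo (fun (b : XB) (y : Y) => PB b * W a b y)} :=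
  comp_converse_general W hW hW1 p R ℓ encA encB dec hsize herr
end

section
/- For the symmetric two-server SPIR scheme where the user, wanting file index θ ∈ {1,...,K}, sends queries Q₁ uniform on 𝔽₂^K and Q₂ with Q_{2,j} = Q_{1,j} for j ≠ θ and Q_{2,θ} = Q_{1,θ} ⊕ 1, and the servers respond X₁ = (⊕_{j: Q_{1,j}=1} W_j) ⊕ S and X₂ = ⊖((⊕_{j: Q_{2,j}=1} W_j) ⊕ S) with S uniform on 𝔽_p^ℓ independent of everything else: (i) correctness: if Q_{1,θ}=1 then X₁ ⊕ X₂ = W_θ, and if Q_{1,θ}=0 then ⊖(X₁ ⊕ X₂) = W_θ; (ii) user privacy: each query Q_i is uniformly distributed on 𝔽₂^K independently of θ; (iii) server privacy: the pair (X₁, X₂) reveals nothing about the files other than W_θ, i.e., conditioned on (Q₁,Q₂,W_θ), (X₁,X₂) is independent of (W_j)_{j≠θ}. -/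
lemma spir_key {p K ℓ : ℕ} (θ : Fin K) (q1 : Fin K → ZMod 2)
    (W : Fin K → Fin ℓ → ZMod p) :
    (∑ j ∈ Finset.univ.filter (fun j => q1 j = 1), W j)
      - (∑ j ∈ Finset.univ.filter
            (fun j => (if j = θ then q1 j + 1 else q1 j) = 1), W j)
    = if q1 θ = 1 then W θ else - W θ := by
  rw [Finset.sum_filter, Finset.sum_filter, ← Finset.sum_sub_distrib]
  rw [Finset.sum_eq_single θ]
  · have h2 : q1 θ = 0 ∨ q1 θ = 1 := by
      have : ∀ x : ZMod 2, x = 0 ∨ x = 1 := by decide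
      exact this _
    rcases h2 with h | h <;> simp [h]
  · intro j _ hj
    simp [hj]
  · simp

/-- Two-server SPIR scheme: correctness, user privacy, and server privacy.
Files `W₁,...,W_K ∈ 𝔽_p^ℓ`, shared randomness `S` uniform on `𝔽_p^ℓ`,
queries `Q₁` uniform on `𝔽₂^K`, `Q_{2,j} = Q_{1,j}` for `j ≠ θ`,
`Q_{2,θ} = Q_{1,θ} ⊕ 1`. Answers `X₁ = (⊕_{j: Q_{1,j}=1} W_j) ⊕ S`,
`X₂ = ⊖((⊕_{j: Q_{2,j}=1} W_j) ⊕ S)`. -/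
theorem spir_two_servers (p : ℕ) [Fact (Nat.Prime p)] (K ℓ : ℕ) (θ : Fin K) :
    -- (i) correctness
    (∀ (q1 : Fin K → ZMod 2) (s : Fin ℓ → ZMod p) (W : Fin K → Fin ℓ → ZMod p),
      (q1 θ = 1 →
        ((∑ j ∈ Finset.univ.filter (fun j => q1 j = 1), W j) + s)
          + (-((∑ j ∈ Finset.univ.filter
                (fun j => (if j = θ then q1 j + 1 else q1 j) = 1), W j) + s))
        = W θ)
      ∧ (q1 θ = 0 →
        -(((∑ j ∈ Finset.univ.filter (fun j => q1 j = 1), W j) + s)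
          + (-((∑ j ∈ Finset.univ.filter
                (fun j => (if j = θ then q1 j + 1 else q1 j) = 1), W j) + s)))
        = W θ))
    -- (ii) user privacy: Q₂ is a bijective function of the uniform Q₁,
    -- hence uniformly distributed, for every θ
    ∧ (∀ q : Fin K → ZMod 2, ∃! q1 : Fin K → ZMod 2,
        (fun j => if j = θ then q1 j + 1 else q1 j) = q)
    -- (iii) server privacy: given the queries and W_θ, the distribution of
    -- (X₁, X₂) over the uniform shared randomness S does not depend on the
    -- other files
    ∧ (∀ (q1 : Fin K → ZMod 2) (W W' : Fin K → Fin ℓ → ZMod p), W θ = W' θ →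
        ∀ x1 x2 : Fin ℓ → ZMod p,
          (Finset.univ.filter (fun s : Fin ℓ → ZMod p =>
              (∑ j ∈ Finset.univ.filter (fun j => q1 j = 1), W j) + s = x1
              ∧ -((∑ j ∈ Finset.univ.filter
                    (fun j => (if j = θ then q1 j + 1 else q1 j) = 1), W j) + s) = x2)).card
          = (Finset.univ.filter (fun s : Fin ℓ → ZMod p =>
              (∑ j ∈ Finset.univ.filter (fun j => q1 j = 1), W' j) + s = x1
              ∧ -((∑ j ∈ Finset.univ.filter
                    (fun j => (if j = θ then q1 j + 1 else q1 j) = 1), W' j) + s) = x2)).card) := by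
  refine ⟨?_, ?_, ?_⟩
  · intro q1 s W
    have hk := spir_key θ q1 W
    constructor
    · intro h
      rw [h] at hk; simp at hk
      rw [← hk]; abel
    · intro h
      have h1 : q1 θ ≠ 1 := by rw [h]; decide
      rw [if_neg h1] at hk
      have : (∑ j ∈ Finset.univ.filter (fun j => q1 j = 1), W j)
          - (∑ j ∈ Finset.univ.filter
              (fun j => (if j = θ then q1 j + 1 else q1 j) = 1), W j) = -W θ := hk
      rw [← neg_eq_iff_eq_neg] at this
      rw [← this]; abel
  · intro q
    refine ⟨fun j => if j = θ then q j + 1 else q j, ?_, ?_⟩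
    · funext j
      by_cases hj : j = θ
      · subst hj
        simp
        have : (1 : ZMod 2) + 1 = 0 := by decide
        rw [add_assoc, this, add_zero]
      · simp [hj]
    · intro y hy
      funext j
      have := congrFun hy j
      by_cases hj : j = θ
      · subst hj
        simp at this ⊢
        have h2 : (1 : ZMod 2) + 1 = 0 := by decide
        rw [← this, add_assoc, h2, add_zero]
      · simpa [hj] using this
  · intro q1 W W' hW x1 x2
    set A := Finset.univ.filter (fun j => q1 j = 1) with hA
    set B := Finset.univ.filter
        (fun j => (if j = θ then q1 j + 1 else q1 j) = 1) with hB
    have hk := spir_key θ q1 W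
    have hk' := spir_key θ q1 W'
    have hdd : (∑ j ∈ A, W j) - (∑ j ∈ B, W j)
        = (∑ j ∈ A, W' j) - (∑ j ∈ B, W' j) := by
      rw [hk, hk', hW]
    apply Finset.card_bij (fun s _ => s + ((∑ j ∈ A, W j) - (∑ j ∈ A, W' j)))
    · intro s hs
      simp only [Finset.mem_filter, Finset.mem_univ, true_and] at hs ⊢
      obtain ⟨h1, h2⟩ := hs
      constructor
      · rw [← h1]; abel
      · rw [← h2]
        have hBB : (∑ j ∈ B, W j) - (∑ j ∈ B, W' j)
            = (∑ j ∈ A, W j) - (∑ j ∈ A, W' j) := by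
          have := hdd
          abel_nf at this ⊢
          linear_combination (norm := abel_nf) - this
        rw [← hBB]; abel
    · intro s hs t ht h
      simpa using h
    · intro s hs
      refine ⟨s + ((∑ j ∈ A, W' j) - (∑ j ∈ A, W j)), ?_, by abel⟩
      simp only [Finset.mem_filter, Finset.mem_univ, true_and] at hs ⊢
      obtain ⟨h1, h2⟩ := hs
      constructor
      · rw [← h1]; abel
      · rw [← h2]
        have hBB : (∑ j ∈ B, W' j) - (∑ j ∈ B, W j)
            = (∑ j ∈ A, W' j) - (∑ j ∈ A, W j) := by
          have := hdd
          abel_nf at this ⊢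
          linear_combination (norm := abel_nf) this
        rw [← hBB]; abel
end
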